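/- For every positive integer m, there exist a set G of exactly m goods and an additive valuation u on subsets of G such that for two individual agents both having valuation u, every allocation (B₁, B₂) of G that is EFX for both agents satisfies |B₁| = 1 or |B₂| = 1. -/

import Mathlib

open Finset

variable {γ : Type*} [DecidableEq γ]

/-- An allocation is EFX (envy-free up to any positively valued good) for an agent with
valuation `u` whose group receives `mine`, the other group receiving `other`. -/
def EFX (u : Finset γ → ℝ) (mine other : Finset γ) : Prop :=
  ∀ g ∈ other, 0 < u {g} → u (other \ {g}) ≤ u mine

/-- A valuation is additive if the value of a set is the sum of values of its singletons. -/
def AdditiveVal (u : Finset γ → ℝ) : Prop :=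
  ∀ S : Finset γ, u S = ∑ g ∈ S, u {g}

/-!
Value good `i` at `2 ^ i`. The most valuable good is then worth more than all other goods
together, so whoever does not hold it envies a holder of any second good even after removing
that second good. EFX therefore forces the holder of the top good to hold nothing else.
-/

lemma AdditiveVal.mono {α : Type*} {u : Finset α → ℝ} (hu : AdditiveVal u)
    (hnonneg : ∀ g, 0 ≤ u {g}) {S T : Finset α} (hST : S ⊆ T) : u S ≤ u T := by
  rw [hu S, hu T]
  exact sum_le_sum_of_subset_of_nonneg hST fun g _ _ ↦ hnonneg g

lemma EFX.eq_singleton_of_lt {u : Finset γ → ℝ} (hu : AdditiveVal u) (hpos : ∀ g, 0 < u {g})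
    {A B : Finset γ} {t : γ} (htA : t ∈ A) (hlt : u B < u {t}) (hEFX : EFX u B A) :
    A = {t} := by
  refine eq_singleton_iff_unique_mem.mpr ⟨htA, fun g hgA ↦ ?_⟩
  by_contra hgt
  have hle : u {t} ≤ u (A \ {g}) :=
    hu.mono (fun g ↦ (hpos g).le) (by simpa [Ne.symm hgt] using htA)
  linarith [hEFX g hgA (hpos g)]

def twoPowVal (m : ℕ) (S : Finset (Fin m)) : ℝ :=
  ∑ g ∈ S, (2 : ℝ) ^ (g : ℕ)

lemma additiveVal_twoPowVal (m : ℕ) : AdditiveVal (twoPowVal m) := by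
  intro S
  simp [twoPowVal]

lemma twoPowVal_singleton_pos {m : ℕ} (g : Fin m) : 0 < twoPowVal m {g} := by
  simp [twoPowVal]

lemma twoPowVal_nonneg {m : ℕ} (S : Finset (Fin m)) : 0 ≤ twoPowVal m S :=
  sum_nonneg fun _ _ ↦ by positivity

lemma twoPowVal_lt_last {n : ℕ} {B : Finset (Fin (n + 1))} (hB : Fin.last n ∉ B) :
    twoPowVal (n + 1) B < twoPowVal (n + 1) {Fin.last n} := by
  have hlt : ∑ k ∈ B.map Fin.valEmbedding, 2 ^ k < 2 ^ n :=
    Nat.geomSum_lt le_rfl <| by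
      simpa using fun g hg ↦ Fin.val_lt_last (ne_of_mem_of_not_mem hg hB)
  rw [sum_map] at hlt
  simpa [twoPowVal] using (by exact_mod_cast hlt : ∑ g ∈ B, (2 : ℝ) ^ (g : ℕ) < 2 ^ n)

/-- For every positive integer m there are m goods and an additive valuation, shared by two
individual agents, such that every EFX allocation gives one of the agents exactly one good. -/
theorem identical_additive_EFX_singleton (m : ℕ) (hm : 0 < m) :
    ∃ u : Finset (Fin m) → ℝ, AdditiveVal u ∧ (∀ S, 0 ≤ u S) ∧
      ∀ B₁ B₂ : Finset (Fin m), Disjoint B₁ B₂ → B₁ ∪ B₂ = Finset.univ →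
        (EFX u B₁ B₂ ∧ EFX u B₂ B₁) → B₁.card = 1 ∨ B₂.card = 1 := by
  obtain ⟨n, rfl⟩ : ∃ n, m = n + 1 := ⟨m - 1, by omega⟩
  refine ⟨twoPowVal (n + 1), additiveVal_twoPowVal _, twoPowVal_nonneg, ?_⟩
  intro B₁ B₂ hdisj hunion ⟨hEFX₁, hEFX₂⟩
  have holder_card {A B : Finset (Fin (n + 1))} (hAB : Disjoint A B) (hA : Fin.last n ∈ A)
      (hEFX : EFX (twoPowVal (n + 1)) B A) : A.card = 1 := by
    rw [hEFX.eq_singleton_of_lt (additiveVal_twoPowVal _) twoPowVal_singleton_pos hA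
      (twoPowVal_lt_last (disjoint_left.mp hAB hA)), card_singleton]
  rcases mem_union.mp (hunion ▸ mem_univ (Fin.last n)) with h₁ | h₂
  · exact .inl (holder_card hdisj h₁ hEFX₂)
  · exact .inr (holder_card hdisj.symm h₂ hEFX₁)
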